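/- Let l ≥ 1 be an integer. For n ∈ {1,…,l} set a_n = (2/(l+1))·sin²(πn/(l+1)), E_n = 2·cos(πn/(l+1)), and c_n = Σ_{1≤m≤l, m≢n mod 2} a_m/(E_m − E_n). For m ∈ {1,…,l} define D_m = Σ_{1≤n≤l, n≠m} (8·a_m·a_n/(E_n − E_m)) · ( c_m + c_n − Σ_{1≤k≤l, k≠m} a_k/(E_k − E_m) + a_m/(E_n − E_m) ). Then |D_m| < 16(l+1)³ for every m ∈ {1,…,l}. -/

import Mathlib

open Real Finset

/-- `a_n = (2/(l+1)) sin²(πn/(l+1))`. -/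
noncomputable def aa (l n : ℕ) : ℝ := (2/((l : ℝ)+1)) * Real.sin (π*n/(l+1))^2

/-- `E_n = 2 cos(πn/(l+1))`. -/
noncomputable def EE (l n : ℕ) : ℝ := 2 * Real.cos (π*n/(l+1))

/-- `c_n = Σ_{1 ≤ m ≤ l, m ≢ n mod 2} a_m / (E_m − E_n)`. -/
noncomputable def cc (l n : ℕ) : ℝ :=
  ∑ m ∈ (Finset.Icc 1 l).filter (fun m => ¬ (m % 2 = n % 2)), aa l m / (EE l m - EE l n)

/-!
Every quotient `a_k / (E_j - E_m)` with `j ≠ m` in `{1,…,l}` is at most `(l+1)/2` in absolute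
value: `a_k ≤ 2/(l+1)`, while `E_j - E_m = 4 sin(π(j+m)/(2(l+1))) sin(π(m-j)/(2(l+1)))` and both
sines are at least `1/(l+1)` by Jordan's inequality, so `|E_j - E_m| ≥ 4/(l+1)²`. Hence `c_n` and
the inner sum are at most `l(l+1)/2`, the prefactor `8 a_m a_n/(E_n - E_m)` is at most `8`, each
summand of `D_m` is at most `8 · 2(l+1)²`, and there are fewer than `l+1` summands.
-/

lemma abs_sum_le_card_mul {ι : Type*} (s : Finset ι) (f : ι → ℝ) {C : ℝ}
    (h : ∀ i ∈ s, |f i| ≤ C) : |∑ i ∈ s, f i| ≤ #s * C :=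
  (abs_sum_le_sum_abs f s).trans <| by simpa using sum_le_card_nsmul s _ C h

lemma two_div_pi_mul_le_sin {a x : ℝ} (ha : 0 ≤ a) (hax : a ≤ x) (hx : x ≤ π - a) :
    2 / π * a ≤ sin x := by
  rcases le_or_gt x (π / 2) with h | h
  · exact (mul_le_mul_of_nonneg_left hax (by positivity)).trans (mul_le_sin (ha.trans hax) h)
  · rw [← sin_pi_sub]
    exact (mul_le_mul_of_nonneg_left (by linarith) (by positivity)).trans
      (mul_le_sin (by linarith) (by linarith))

lemma inv_le_sin_pi_mul_div {L t : ℝ} (hL : 0 < L) (ht₁ : 1 ≤ t) (ht₂ : t ≤ 2 * L - 1) :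
    L⁻¹ ≤ sin (π * t / (2 * L)) := by
  have hπ := pi_pos
  calc L⁻¹ = 2 / π * (π / (2 * L)) := by field_simp
    _ ≤ sin (π * t / (2 * L)) := by
      apply two_div_pi_mul_le_sin (by positivity)
      · gcongr
        nlinarith
      · rw [div_le_iff₀ (by positivity), sub_mul, div_mul_cancel₀ _ (by positivity)]
        nlinarith

lemma EE_sub_EE (l k m : ℕ) :
    EE l k - EE l m =
      4 * sin (π * (k + m) / (2 * (l + 1))) * sin (π * (m - k) / (2 * (l + 1))) := by
  have h₁ : (π * k / (l + 1) + π * m / (l + 1)) / 2 = π * (k + m) / (2 * (l + 1)) := by field_simp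
  have h₂ : (π * k / (l + 1) - π * m / (l + 1)) / 2 = -(π * (m - k) / (2 * (l + 1))) := by
    field_simp; ring
  rw [EE, EE, ← mul_sub, cos_sub_cos, h₁, h₂, sin_neg]
  ring

lemma four_div_sq_le_EE_sub_EE {l k m : ℕ} (hk : 1 ≤ k) (hkm : k < m) (hm : m ≤ l) :
    4 / ((l : ℝ) + 1) ^ 2 ≤ EE l k - EE l m := by
  have hk' : (1 : ℝ) ≤ k := by exact_mod_cast hk
  have hkm' : (k : ℝ) + 1 ≤ m := by exact_mod_cast hkm
  have hm' : (m : ℝ) ≤ l := by exact_mod_cast hm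
  have hL : (0 : ℝ) < l + 1 := by positivity
  have h₁ := inv_le_sin_pi_mul_div hL (t := k + m) (by linarith) (by linarith)
  have h₂ := inv_le_sin_pi_mul_div hL (t := m - k) (by linarith) (by linarith)
  rw [EE_sub_EE, mul_assoc, div_eq_mul_inv, ← inv_pow, sq]
  gcongr
  exact (inv_pos.2 hL).le.trans h₁

lemma four_div_sq_le_abs_EE_sub_EE {l j m : ℕ} (hj : j ∈ Icc 1 l) (hm : m ∈ Icc 1 l)
    (hjm : j ≠ m) : 4 / ((l : ℝ) + 1) ^ 2 ≤ |EE l j - EE l m| := by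
  rw [mem_Icc] at hj hm
  rcases hjm.lt_or_gt with h | h
  · exact (four_div_sq_le_EE_sub_EE hj.1 h hm.2).trans (le_abs_self _)
  · rw [abs_sub_comm]
    exact (four_div_sq_le_EE_sub_EE hm.1 h hj.2).trans (le_abs_self _)

lemma aa_nonneg (l n : ℕ) : 0 ≤ aa l n := by
  unfold aa
  positivity

lemma aa_le (l n : ℕ) : aa l n ≤ 2 / ((l : ℝ) + 1) :=
  mul_le_of_le_one_right (by positivity) (sin_sq_le_one _)

lemma abs_aa_div_EE_sub_EE_le {l j m : ℕ} (k : ℕ) (hj : j ∈ Icc 1 l) (hm : m ∈ Icc 1 l)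
    (hjm : j ≠ m) : |aa l k / (EE l j - EE l m)| ≤ ((l : ℝ) + 1) / 2 := by
  rw [abs_div, abs_of_nonneg (aa_nonneg l k)]
  calc aa l k / |EE l j - EE l m| ≤ (2 / ((l : ℝ) + 1)) / (4 / ((l : ℝ) + 1) ^ 2) :=
        div_le_div₀ (by positivity) (aa_le l k) (by positivity)
          (four_div_sq_le_abs_EE_sub_EE hj hm hjm)
    _ = ((l : ℝ) + 1) / 2 := by field_simp; ring

lemma abs_sum_aa_div_EE_sub_EE_le {l m : ℕ} {s : Finset ℕ} (hs : s ⊆ (Icc 1 l).erase m)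
    (hm : m ∈ Icc 1 l) : |∑ k ∈ s, aa l k / (EE l k - EE l m)| ≤ l * (((l : ℝ) + 1) / 2) := by
  have hcard : (#s : ℝ) ≤ l := by
    exact_mod_cast (card_le_card hs).trans <| (card_erase_le).trans_eq (Nat.card_Icc 1 l)
  refine (abs_sum_le_card_mul s _ fun k hk => ?_).trans (by gcongr)
  have hk := hs hk
  exact abs_aa_div_EE_sub_EE_le k (mem_of_mem_erase hk) hm (ne_of_mem_erase hk)

lemma abs_cc_le {l n : ℕ} (hn : n ∈ Icc 1 l) : |cc l n| ≤ l * (((l : ℝ) + 1) / 2) := by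
  refine abs_sum_aa_div_EE_sub_EE_le (fun k hk => ?_) hn
  rw [mem_filter] at hk
  exact mem_erase.2 ⟨by rintro rfl; exact hk.2 rfl, hk.1⟩

lemma abs_eight_mul_aa_mul_aa_div_le {l m n : ℕ} (hm : m ∈ Icc 1 l) (hn : n ∈ Icc 1 l)
    (hnm : n ≠ m) : |8 * aa l m * aa l n / (EE l n - EE l m)| ≤ 8 := by
  have hL : (0 : ℝ) < l + 1 := by positivity
  rw [mul_right_comm, mul_div_assoc, abs_mul, abs_of_nonneg (by positivity [aa_nonneg l n])]
  calc 8 * aa l n * |aa l m / (EE l n - EE l m)| ≤ 8 * (2 / (l + 1)) * ((l + 1) / 2) := by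
        gcongr
        exacts [aa_le l n, abs_aa_div_EE_sub_EE_le m hn hm hnm]
    _ = 8 := by field_simp

lemma abs_summand_le {l m n : ℕ} (hm : m ∈ Icc 1 l) (hn : n ∈ (Icc 1 l).erase m) :
    |(8 * aa l m * aa l n / (EE l n - EE l m)) *
        (cc l m + cc l n - (∑ k ∈ (Icc 1 l).erase m, aa l k / (EE l k - EE l m))
          + aa l m / (EE l n - EE l m))| ≤ 16 * ((l : ℝ) + 1) ^ 2 := by
  obtain ⟨hnm, hn⟩ := mem_erase.1 hn
  have hc := abs_cc_le hm
  have hc' := abs_cc_le hn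
  have hS := abs_sum_aa_div_EE_sub_EE_le (subset_refl _) hm
  have hD := abs_aa_div_EE_sub_EE_le m hn hm hnm
  have hbracket : |cc l m + cc l n - (∑ k ∈ (Icc 1 l).erase m, aa l k / (EE l k - EE l m))
      + aa l m / (EE l n - EE l m)| ≤ 2 * ((l : ℝ) + 1) ^ 2 := by
    have hl : (0 : ℝ) ≤ l := by positivity
    rw [abs_le] at hc hc' hS hD ⊢
    constructor <;> nlinarith
  rw [abs_mul]
  calc _ ≤ 8 * (2 * ((l : ℝ) + 1) ^ 2) :=
        mul_le_mul (abs_eight_mul_aa_mul_aa_div_le hm hn hnm) hbracket (abs_nonneg _) (by norm_num)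
    _ = 16 * ((l : ℝ) + 1) ^ 2 := by ring

theorem stmt_14_general (l : ℕ) (m : ℕ) (hm : m ∈ Finset.Icc 1 l) :
    |∑ n ∈ (Finset.Icc 1 l).erase m,
        (8 * aa l m * aa l n / (EE l n - EE l m)) *
          (cc l m + cc l n - (∑ k ∈ (Finset.Icc 1 l).erase m, aa l k / (EE l k - EE l m))
            + aa l m / (EE l n - EE l m))|
      < 16 * ((l : ℝ) + 1)^3 := by
  have hcard : (#((Icc 1 l).erase m) : ℝ) < l + 1 := by
    rw [card_erase_of_mem hm, Nat.card_Icc, Nat.add_sub_cancel]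
    exact_mod_cast Nat.sub_lt_succ l 1
  calc _ ≤ #((Icc 1 l).erase m) * (16 * ((l : ℝ) + 1) ^ 2) :=
        abs_sum_le_card_mul _ _ fun n hn => abs_summand_le hm hn
    _ < (l + 1) * (16 * ((l : ℝ) + 1) ^ 2) := by gcongr
    _ = 16 * ((l : ℝ) + 1) ^ 3 := by ring

/-- The bound `|D_m| < 16(l+1)³` for the correction term `D_m`. -/
theorem stmt_14 (l : ℕ) (hl : 1 ≤ l) (m : ℕ) (hm : m ∈ Finset.Icc 1 l) :
    |∑ n ∈ (Finset.Icc 1 l).erase m,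
        (8 * aa l m * aa l n / (EE l n - EE l m)) *
          (cc l m + cc l n - (∑ k ∈ (Finset.Icc 1 l).erase m, aa l k / (EE l k - EE l m))
            + aa l m / (EE l n - EE l m))|
      < 16 * ((l : ℝ) + 1)^3 :=
  stmt_14_general l m hm
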